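/- arXiv:2209.03447 — 6 statements merged into one kernel-verified Lean document; each statement's English description precedes it below -/
import Mathlib

section
/- Let k ≥ 2 be an integer and let Φ : ℝ^{k−1} → ℝ be defined by Φ(x) = log(1 + Σ_{s=1}^{k−1} exp(x_s)). Then for all u, v ∈ ℝ^{k−1}, the function g : ℝ → ℝ given by g(t) = Φ(u + t v) satisfies |g'''(t)| ≤ 5 ‖v‖₂ · g''(t) for every t ∈ ℝ, where g'' and g''' denote the second and third derivatives of g and ‖·‖₂ is the Euclidean norm. -/
/-!
Along a line, `Φ` is a log-sum-exp `t ↦ log ∑ᵢ exp (cᵢ + t aᵢ)` over `k` indices, the extra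
index carrying `c = a = 0` (this is the `1 +` in `Φ`). Its second and third derivatives are the
variance and the third central moment of `a` under the Gibbs weights `exp (cᵢ + t aᵢ)`. All
`|aᵢ|`, hence also their weighted mean `μ`, are at most `‖v‖`, so `|aᵢ - μ| ≤ 2 ‖v‖` and the
third central moment is at most `2 ‖v‖` times the variance.
-/

/-- The multinomial log-partition function `Φ(x) = log(1 + Σ_s exp(x_s))`. -/
noncomputable def Phi {m : ℕ} (x : EuclideanSpace ℝ (Fin m)) : ℝ :=
  Real.log (1 + ∑ s, Real.exp (x s))

open Finset Real

section CentralMoments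

variable {ι : Type*} [Fintype ι] (q a : ι → ℝ)

theorem sum_mul_sub_sq_eq (hS : ∑ i, q i ≠ 0) :
    ∑ i, q i * (a i - (∑ i, q i * a i) / ∑ i, q i) ^ 2
      = ((∑ i, q i * a i ^ 2) * (∑ i, q i) - (∑ i, q i * a i) ^ 2) / ∑ i, q i := by
  set μ := (∑ i, q i * a i) / ∑ i, q i with hμ
  have hexpand : ∑ i, q i * (a i - μ) ^ 2
      = ∑ i, q i * a i ^ 2 - 2 * μ * ∑ i, q i * a i + μ ^ 2 * ∑ i, q i := by
    rw [mul_sum, mul_sum, ← sum_sub_distrib, ← sum_add_distrib]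
    exact sum_congr rfl fun i _ => by ring
  rw [hexpand, hμ]
  field_simp
  ring

theorem sum_mul_sub_pow_three_eq (hS : ∑ i, q i ≠ 0) :
    ∑ i, q i * (a i - (∑ i, q i * a i) / ∑ i, q i) ^ 3
      = ((∑ i, q i * a i ^ 3) * (∑ i, q i) ^ 2
          - 3 * (∑ i, q i * a i) * (∑ i, q i * a i ^ 2) * (∑ i, q i)
          + 2 * (∑ i, q i * a i) ^ 3) / (∑ i, q i) ^ 2 := by
  set μ := (∑ i, q i * a i) / ∑ i, q i with hμ
  have hexpand : ∑ i, q i * (a i - μ) ^ 3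
      = ∑ i, q i * a i ^ 3 - 3 * μ * ∑ i, q i * a i ^ 2 + 3 * μ ^ 2 * ∑ i, q i * a i
          - μ ^ 3 * ∑ i, q i := by
    rw [mul_sum, mul_sum, mul_sum, ← sum_sub_distrib, ← sum_add_distrib, ← sum_sub_distrib]
    exact sum_congr rfl fun i _ => by ring
  rw [hexpand, hμ]
  field_simp
  ring

variable {q a}

theorem abs_sum_mul_pow_three_le {B : ℝ} (hq : ∀ i, 0 ≤ q i) (ha : ∀ i, |a i| ≤ B) :
    |∑ i, q i * a i ^ 3| ≤ B * ∑ i, q i * a i ^ 2 := by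
  rw [mul_sum]
  refine (abs_sum_le_sum_abs _ _).trans (sum_le_sum fun i _ => ?_)
  rw [abs_mul, abs_pow, abs_of_nonneg (hq i), pow_succ, ← sq_abs (a i)]
  nlinarith [mul_nonneg (hq i) (sq_nonneg |a i|), ha i]

theorem abs_sub_div_sum_le {M : ℝ} (hq : ∀ i, 0 ≤ q i) (hS : 0 < ∑ i, q i)
    (ha : ∀ i, |a i| ≤ M) (j : ι) :
    |a j - (∑ i, q i * a i) / ∑ i, q i| ≤ 2 * M := by
  have hmean : |(∑ i, q i * a i) / ∑ i, q i| ≤ M := by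
    rw [abs_div, abs_of_pos hS, div_le_iff₀ hS, mul_sum]
    refine (abs_sum_le_sum_abs _ _).trans (sum_le_sum fun i _ => ?_)
    rw [abs_mul, abs_of_nonneg (hq i), mul_comm]
    exact mul_le_mul_of_nonneg_right (ha i) (hq i)
  linarith [abs_sub _ _ |>.trans (add_le_add (ha j) hmean)]

end CentralMoments

section LogSumExpAlongLine

variable {ι : Type*} [Fintype ι] (c a : ι → ℝ)

noncomputable def expMoment (j : ℕ) (t : ℝ) : ℝ :=
  ∑ i, a i ^ j * exp (c i + t * a i)

theorem hasDerivAt_expMoment (j : ℕ) (t : ℝ) :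
    HasDerivAt (expMoment c a j) (expMoment c a (j + 1) t) t := by
  refine HasDerivAt.fun_sum fun i _ => ?_
  have hline : HasDerivAt (fun t => c i + t * a i) (a i) t := by
    simpa using ((hasDerivAt_id t).mul_const (a i)).const_add (c i)
  exact (hline.exp.const_mul (a i ^ j)).congr_deriv (by ring)

variable [Nonempty ι]

theorem expMoment_zero_pos (t : ℝ) : 0 < expMoment c a 0 t :=
  sum_pos (fun i _ => by simp [exp_pos]) univ_nonempty

theorem deriv_log_expMoment :
    deriv (fun t => log (expMoment c a 0 t)) = fun t => expMoment c a 1 t / expMoment c a 0 t :=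
  funext fun t => ((hasDerivAt_expMoment c a 0 t).log (expMoment_zero_pos c a t).ne').deriv

theorem iteratedDeriv_two_log_expMoment :
    iteratedDeriv 2 (fun t => log (expMoment c a 0 t)) = fun t =>
      (expMoment c a 2 t * expMoment c a 0 t - expMoment c a 1 t ^ 2) / expMoment c a 0 t ^ 2 := by
  rw [iteratedDeriv_succ, iteratedDeriv_one, deriv_log_expMoment]
  funext t
  exact (((hasDerivAt_expMoment c a 1 t).div (hasDerivAt_expMoment c a 0 t)
    (expMoment_zero_pos c a t).ne').congr_deriv (by ring)).deriv

theorem iteratedDeriv_three_log_expMoment :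
    iteratedDeriv 3 (fun t => log (expMoment c a 0 t)) = fun t =>
      (expMoment c a 3 t * expMoment c a 0 t ^ 2
        - 3 * expMoment c a 1 t * expMoment c a 2 t * expMoment c a 0 t
        + 2 * expMoment c a 1 t ^ 3) / expMoment c a 0 t ^ 3 := by
  rw [iteratedDeriv_succ, iteratedDeriv_two_log_expMoment]
  funext t
  have hM := fun j => hasDerivAt_expMoment c a j t
  have hpos := expMoment_zero_pos c a t
  refine ((((hM 2).fun_mul (hM 0)).fun_sub ((hM 1).fun_pow 2)).fun_div ((hM 0).fun_pow 2)
    (by positivity)).congr_deriv ?_ |>.deriv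
  field_simp
  ring

theorem abs_iteratedDeriv_three_log_expMoment_le {M : ℝ} (ha : ∀ i, |a i| ≤ M) (t : ℝ) :
    |iteratedDeriv 3 (fun t => log (expMoment c a 0 t)) t|
      ≤ 2 * M * iteratedDeriv 2 (fun t => log (expMoment c a 0 t)) t := by
  set q : ι → ℝ := fun i => exp (c i + t * a i)
  have hmoment : ∀ j, expMoment c a j t = ∑ i, q i * a i ^ j :=
    fun j => sum_congr rfl fun i _ => mul_comm _ _
  have hq : ∀ i, 0 ≤ q i := fun i => (exp_pos _).le
  have hS : 0 < ∑ i, q i := by simpa [hmoment] using expMoment_zero_pos c a t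
  have h2 : iteratedDeriv 2 (fun t => log (expMoment c a 0 t)) t
      = (∑ i, q i * (a i - (∑ i, q i * a i) / ∑ i, q i) ^ 2) / ∑ i, q i := by
    rw [iteratedDeriv_two_log_expMoment, sum_mul_sub_sq_eq q a hS.ne']
    simp only [hmoment, pow_zero, mul_one, pow_one]
    field_simp
  have h3 : iteratedDeriv 3 (fun t => log (expMoment c a 0 t)) t
      = (∑ i, q i * (a i - (∑ i, q i * a i) / ∑ i, q i) ^ 3) / ∑ i, q i := by
    rw [iteratedDeriv_three_log_expMoment, sum_mul_sub_pow_three_eq q a hS.ne']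
    simp only [hmoment, pow_zero, mul_one, pow_one]
    field_simp
  rw [h2, h3, abs_div, abs_of_pos hS, mul_div_assoc']
  gcongr
  exact abs_sum_mul_pow_three_le hq (abs_sub_div_sum_le hq hS ha)

end LogSumExpAlongLine

theorem Phi_add_smul_eq_log_expMoment {m : ℕ} (u v : EuclideanSpace ℝ (Fin m)) (t : ℝ) :
    Phi (u + t • v) = log (expMoment (Fin.cons 0 u.ofLp) (Fin.cons 0 v.ofLp) 0 t) := by
  simp [Phi, expMoment, Fin.sum_univ_succ, mul_comm t]

theorem stmt_0_general (k : ℕ)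
    (u v : EuclideanSpace ℝ (Fin (k - 1)))
    (g : ℝ → ℝ) (hg : ∀ t : ℝ, g t = Phi (u + t • v)) :
    ∀ t : ℝ, |iteratedDeriv 3 g t| ≤ 5 * ‖v‖ * iteratedDeriv 2 g t := by
  intro t
  obtain rfl : g = fun t => log (expMoment (Fin.cons 0 u.ofLp) (Fin.cons 0 v.ofLp) 0 t) :=
    funext fun t => (hg t).trans (Phi_add_smul_eq_log_expMoment u v t)
  have hcoord : ∀ i, |(Fin.cons 0 v.ofLp : Fin (k - 1 + 1) → ℝ) i| ≤ ‖v‖ :=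
    Fin.cases (by simp) fun s => by simpa using PiLp.norm_apply_le v s
  have hbound := abs_iteratedDeriv_three_log_expMoment_le (Fin.cons 0 u.ofLp) _ hcoord t
  linarith [(abs_nonneg _).trans hbound]

/-- Proposition 1: modified self-concordance of `Φ` with constant `R = 5`. -/
theorem stmt_0 (k : ℕ) (hk : 2 ≤ k)
    (u v : EuclideanSpace ℝ (Fin (k - 1)))
    (g : ℝ → ℝ) (hg : ∀ t : ℝ, g t = Phi (u + t • v)) :
    ∀ t : ℝ, |iteratedDeriv 3 g t| ≤ 5 * ‖v‖ * iteratedDeriv 2 g t :=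
  stmt_0_general k u v g hg
end

section
/- Let k ≥ 2 be an integer, u, v ∈ ℝ^{k−1}, and let g(t) = Φ(u + t v) where Φ(x) = log(1 + Σ_{s=1}^{k−1} exp(x_s)). Setting r_s(t) = exp(u_s + t v_s) for s ∈ {1,…,k−1}, the third derivative of g satisfies, for all t ∈ ℝ, g'''(t) = [ Σ_{1 ≤ i < j ≤ k−1} r_i(t) r_j(t) (v_i − v_j)² · ( Σ_{l=1}^{k−1} (v_i + v_j − 2 v_l) r_l(t) ) + Σ_{i=1}^{k−1} v_i² r_i(t) · ( v_i (1 + 2 Σ_{j=1}^{k−1} r_j(t)) − 3 Σ_{j=1}^{k−1} v_j r_j(t) ) ] / (1 + Σ_{s=1}^{k−1} r_s(t))³. -/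
/-!
Write `S = 1 + Σ_s r_s` and `M_m = Σ_s v_s^m r_s`. Then `g = log S` with `S' = M₁`, `M₁' = M₂`,
`M₂' = M₃`, so `g‴ = (M₃ S² - 3 M₁ M₂ S + 2 M₁³) / S³`, the third central moment of the law giving
weight `1/S` to `0` and `r_s/S` to `v_s`. The stated numerator is a symmetrization of this
polynomial: the double sum `Σ_{i,j} r_i r_j (v_i - v_j)² ((v_i + v_j) M₀ - 2 M₁)` equals
`2 (M₃ M₀² - 3 M₀ M₁ M₂ + 2 M₁³)`, the pairs `i < j` contribute half of it, and the diagonal sum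
supplies the remaining `M₃ (1 + 2 M₀) - 3 M₁ M₂`.
-/

open Finset Real

section PairSums

variable {ι R : Type*} [Fintype ι] [LinearOrder ι] [AddCommMonoid R]

theorem sum_sum_eq_two_nsmul_sum_filter_lt {F : ι → ι → R} (hF : ∀ i j, F i j = F j i)
    (hdiag : ∀ i, F i i = 0) :
    ∑ i, ∑ j, F i j = 2 • ∑ i, ∑ j ∈ univ.filter (i < ·), F i j := by
  have hsplit : ∀ i j, F i j = (if i < j then F i j else 0) + (if j < i then F j i else 0) := by
    intro i j
    rcases lt_trichotomy i j with h | rfl | h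
    · simp [h, h.not_gt]
    · simp [hdiag]
    · simp [h, h.not_gt, hF i j]
  calc ∑ i, ∑ j, F i j
      = ∑ i, ∑ j, (if i < j then F i j else 0) + ∑ i, ∑ j, (if j < i then F j i else 0) := by
        rw [← sum_add_distrib]
        exact sum_congr rfl fun i _ => (sum_congr rfl fun j _ => hsplit i j).trans sum_add_distrib
    _ = 2 • ∑ i, ∑ j ∈ univ.filter (i < ·), F i j := by
        rw [sum_comm (f := fun i j => if j < i then F j i else 0), two_nsmul]
        simp only [sum_filter]

end PairSums

section Moments

variable {ι K : Type*} [Fintype ι] [CommRing K]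

def moment (v w : ι → K) (m : ℕ) : K := ∑ s, v s ^ m * w s

@[simp] theorem moment_zero (v w : ι → K) : moment v w 0 = ∑ s, w s := by simp [moment]

@[simp] theorem moment_one (v w : ι → K) : moment v w 1 = ∑ s, v s * w s := by simp [moment]

theorem sum_sum_mul_sq_sub_eq_moments (v w : ι → K) :
    ∑ i, ∑ j, w i * w j * (v i - v j) ^ 2 * ((v i + v j) * moment v w 0 - 2 * moment v w 1) =
      2 * (moment v w 3 * moment v w 0 ^ 2 - 3 * moment v w 0 * moment v w 1 * moment v w 2
        + 2 * moment v w 1 ^ 3) := by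
  set A := moment v w 0
  set B := moment v w 1
  -- products of moment summands `v ^ a * w`, so that every double sum factors
  have hexpand : ∀ i j, w i * w j * (v i - v j) ^ 2 * ((v i + v j) * A - 2 * B) =
      A * ((v i ^ 3 * w i) * (v j ^ 0 * w j) - (v i ^ 2 * w i) * (v j ^ 1 * w j)
          - (v i ^ 1 * w i) * (v j ^ 2 * w j) + (v i ^ 0 * w i) * (v j ^ 3 * w j))
        - 2 * B * ((v i ^ 2 * w i) * (v j ^ 0 * w j) - 2 * ((v i ^ 1 * w i) * (v j ^ 1 * w j))
          + (v i ^ 0 * w i) * (v j ^ 2 * w j)) := by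
    intro i j; ring
  simp only [hexpand, ← mul_sum, sum_add_distrib, sum_sub_distrib, ← sum_mul]
  simp only [show ∀ a, ∑ s, v s ^ a * w s = moment v w a from fun _ => rfl]
  ring

theorem sum_filter_lt_add_sum_eq_moments [LinearOrder ι] [NoZeroDivisors K] [NeZero (2 : K)] (v w : ι → K) :
    ∑ i, ∑ j ∈ univ.filter (i < ·),
        w i * w j * (v i - v j) ^ 2 * (∑ l, (v i + v j - 2 * v l) * w l)
      + ∑ i, v i ^ 2 * w i * (v i * (1 + 2 * ∑ j, w j) - 3 * ∑ j, v j * w j) =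
    moment v w 3 * (1 + moment v w 0) ^ 2 - 3 * moment v w 1 * moment v w 2 * (1 + moment v w 0)
      + 2 * moment v w 1 ^ 3 := by
  have hinner : ∀ i j, ∑ l, (v i + v j - 2 * v l) * w l
      = (v i + v j) * moment v w 0 - 2 * moment v w 1 := by
    intro i j
    simp only [moment_zero, moment_one, mul_sum, ← sum_sub_distrib]
    exact sum_congr rfl fun l _ => by ring
  simp only [hinner]
  have hpairs := sum_sum_mul_sq_sub_eq_moments v w
  rw [sum_sum_eq_two_nsmul_sum_filter_lt (fun i j => by ring) (fun i => by ring), two_nsmul,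
    ← two_mul] at hpairs
  rw [mul_left_cancel₀ two_ne_zero hpairs]
  have hdiag : ∀ a b : K,
      ∑ i, v i ^ 2 * w i * (v i * a - b) = a * moment v w 3 - b * moment v w 2 := by
    intro a b
    simp only [moment, mul_sum, ← sum_sub_distrib]
    exact sum_congr rfl fun i _ => by ring
  rw [hdiag, moment_zero, moment_one]
  ring

end Moments

theorem iteratedDeriv_three_log {f f₁ f₂ f₃ : ℝ → ℝ} (hf : ∀ x, HasDerivAt f (f₁ x) x)
    (hf₁ : ∀ x, HasDerivAt f₁ (f₂ x) x) (hf₂ : ∀ x, HasDerivAt f₂ (f₃ x) x)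
    (hf₀ : ∀ x, f x ≠ 0) (x : ℝ) :
    iteratedDeriv 3 (fun x => log (f x)) x =
      (f₃ x * f x ^ 2 - 3 * f₁ x * f₂ x * f x + 2 * f₁ x ^ 3) / f x ^ 3 := by
  have hd₁ : deriv (fun x => log (f x)) = fun x => f₁ x / f x :=
    funext fun x => ((hf x).log (hf₀ x)).deriv
  have hd₂ : deriv (fun x => f₁ x / f x) = fun x => (f₂ x * f x - f₁ x * f₁ x) / f x ^ 2 :=
    funext fun x => ((hf₁ x).div (hf x) (hf₀ x)).deriv
  have hd₃ := ((((hf₂ x).fun_mul (hf x)).fun_sub ((hf₁ x).fun_mul (hf₁ x))).fun_div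
    ((hf x).fun_pow 2) (pow_ne_zero 2 (hf₀ x))).deriv
  rw [iteratedDeriv_succ, iteratedDeriv_succ, iteratedDeriv_one, hd₁, hd₂, hd₃]
  have := hf₀ x
  field_simp
  norm_num
  ring

theorem hasDerivAt_moment_exp {ι : Type*} [Fintype ι] (u v : ι → ℝ) (m : ℕ) (t : ℝ) :
    HasDerivAt (fun t => moment v (fun s => exp (u s + t * v s)) m)
      (moment v (fun s => exp (u s + t * v s)) (m + 1)) t := by
  simp only [moment]
  refine HasDerivAt.fun_sum fun s _ => ?_
  have hlin : HasDerivAt (fun t => u s + t * v s) (v s) t := by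
    simpa using ((hasDerivAt_id t).mul_const (v s)).const_add (u s)
  exact ((hlin.exp).const_mul (v s ^ m)).congr_deriv (by ring)

theorem stmt_2_general (k : ℕ) (u v : Fin (k - 1) → ℝ)
    (g : ℝ → ℝ) (hg : ∀ t : ℝ, g t = Real.log (1 + ∑ s, Real.exp (u s + t * v s)))
    (r : Fin (k - 1) → ℝ → ℝ) (hr : ∀ s t, r s t = Real.exp (u s + t * v s)) :
    ∀ t : ℝ, iteratedDeriv 3 g t =
      ((∑ i, ∑ j ∈ Finset.univ.filter (fun j => i < j),
          r i t * r j t * (v i - v j) ^ 2 * (∑ l, (v i + v j - 2 * v l) * r l t))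
        + ∑ i, (v i) ^ 2 * r i t *
            (v i * (1 + 2 * ∑ j, r j t) - 3 * ∑ j, v j * r j t))
        / (1 + ∑ s, r s t) ^ 3 := by
  intro t
  obtain rfl : r = fun s t => exp (u s + t * v s) := funext₂ hr
  obtain rfl : g = fun t => log (1 + ∑ s, exp (u s + t * v s)) := funext hg
  have hf : ∀ t, HasDerivAt (fun t => 1 + ∑ s, exp (u s + t * v s))
      (moment v (fun s => exp (u s + t * v s)) 1) t := fun t => by
    simpa using (hasDerivAt_moment_exp u v 0 t).const_add 1
  rw [iteratedDeriv_three_log hf (hasDerivAt_moment_exp u v 1) (hasDerivAt_moment_exp u v 2)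
    (fun t => by positivity), sum_filter_lt_add_sum_eq_moments v (fun s => exp (u s + t * v s))]
  simp only [moment_zero, Nat.reduceAdd]

/-- Third derivative formula for `g(t) = Φ(u + t v)` with
`Φ(x) = log(1 + Σ_s exp(x_s))` and `r_s(t) = exp(u_s + t v_s)`. -/
theorem stmt_2 (k : ℕ) (hk : 2 ≤ k) (u v : Fin (k - 1) → ℝ)
    (g : ℝ → ℝ) (hg : ∀ t : ℝ, g t = Real.log (1 + ∑ s, Real.exp (u s + t * v s)))
    (r : Fin (k - 1) → ℝ → ℝ) (hr : ∀ s t, r s t = Real.exp (u s + t * v s)) :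
    ∀ t : ℝ, iteratedDeriv 3 g t =
      ((∑ i, ∑ j ∈ Finset.univ.filter (fun j => i < j),
          r i t * r j t * (v i - v j) ^ 2 * (∑ l, (v i + v j - 2 * v l) * r l t))
        + ∑ i, (v i) ^ 2 * r i t *
            (v i * (1 + 2 * ∑ j, r j t) - 3 * ∑ j, v j * r j t))
        / (1 + ∑ s, r s t) ^ 3 :=
  stmt_2_general k u v g hg r hr
end

section
/- Let k ≥ 2 be an integer, define Φ : ℝ^{k−1} → ℝ by Φ(x) = log(1 + Σ_{s=1}^{k−1} exp(x_s)) and σ : ℝ^{k−1} → ℝ^{k−1} by σ(x)_i = exp(x_i) / (1 + Σ_{s=1}^{k−1} exp(x_s)). Then for all a, b ∈ ℝ^{k−1}, the Bregman divergence of Φ is at most half the squared Euclidean distance: Φ(b) − Φ(a) − ⟨σ(a), b − a⟩ ≤ (1/2) ‖b − a‖₂². -/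
/-- The softmax map `σ(x)_i = exp(x_i) / (1 + Σ_s exp(x_s))`. -/
noncomputable def sig {m : ℕ} (x : EuclideanSpace ℝ (Fin m)) (i : Fin m) : ℝ :=
  Real.exp (x i) / (1 + ∑ s, Real.exp (x s))

open Real

theorem sub_sub_deriv_mul_le_of_hasDerivAt_le {f f' f'' : ℝ → ℝ} {C x y : ℝ}
    (hf : ∀ t, HasDerivAt f (f' t) t) (hf' : ∀ t, HasDerivAt f' (f'' t) t)
    (hC : ∀ t, f'' t ≤ C) (hxy : x ≤ y) :
    f y - f x - f' x * (y - x) ≤ C / 2 * (y - x) ^ 2 := by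
  have hf'_growth : ∀ t, x ≤ t → f' t - f' x ≤ C * (t - x) := fun t hxt =>
    image_sub_le_mul_sub_of_deriv_le (fun s => (hf' s).differentiableAt)
      (fun s => (hf' s).deriv ▸ hC s) hxt
  let g : ℝ → ℝ := fun t => f t - f' x * t - C / 2 * (t - x) ^ 2
  have hg : ∀ t, HasDerivAt g (f' t - f' x - C * (t - x)) t := fun t => by
    have hlin := (hf t).sub ((hasDerivAt_id' t).const_mul (f' x))
    have hsq := (((hasDerivAt_id' t).sub_const x).pow 2).const_mul (C / 2)
    exact (hlin.sub hsq).congr_deriv (by push_cast; ring)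
  have hg_anti : AntitoneOn g (Set.Ici x) := by
    refine antitoneOn_of_deriv_nonpos (convex_Ici x)
      (fun t _ => (hg t).continuousAt.continuousWithinAt)
      (fun t _ => (hg t).differentiableAt.differentiableWithinAt) fun t ht => ?_
    rw [interior_Ici] at ht
    rw [(hg t).deriv]
    linarith [hf'_growth t (le_of_lt ht)]
  have := hg_anti Set.self_mem_Ici hxy hxy
  simp only [g, sub_self] at this
  linarith

section LogSumExp

variable {ι : Type*} [Fintype ι]

theorem sum_sq_mul_exp_le (v x : ι → ℝ) :
    ∑ i, v i ^ 2 * exp (x i) ≤ (∑ i, v i ^ 2) * (1 + ∑ i, exp (x i)) := by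
  rw [Finset.sum_mul]
  refine Finset.sum_le_sum fun i _ => mul_le_mul_of_nonneg_left ?_ (sq_nonneg _)
  have := Finset.single_le_sum (fun j _ => (exp_pos (x j)).le) (Finset.mem_univ i)
  linarith

theorem hasDerivAt_sum_mul_exp_line (w a v : ι → ℝ) (t : ℝ) :
    HasDerivAt (fun t => ∑ i, w i * exp (a i + t * v i))
      (∑ i, w i * v i * exp (a i + t * v i)) t := by
  refine HasDerivAt.fun_sum fun i _ => ?_
  exact ((((hasDerivAt_mul_const (v i)).const_add (a i)).exp).const_mul (w i)).congr_deriv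
    (by ring)

theorem log_one_add_sum_exp_sub_le (a b : ι → ℝ) :
    log (1 + ∑ i, exp (b i)) - log (1 + ∑ i, exp (a i))
      - ∑ i, exp (a i) / (1 + ∑ s, exp (a s)) * (b i - a i)
      ≤ 1 / 2 * ∑ i, (b i - a i) ^ 2 := by
  set v : ι → ℝ := fun i => b i - a i
  let Z : ℝ → ℝ := fun t => 1 + ∑ i, exp (a i + t * v i)
  let Z' : ℝ → ℝ := fun t => ∑ i, v i * exp (a i + t * v i)
  let Z'' : ℝ → ℝ := fun t => ∑ i, v i * v i * exp (a i + t * v i)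
  have hZ_pos : ∀ t, 0 < Z t := fun t => by positivity
  have hZ : ∀ t, HasDerivAt Z (Z' t) t := fun t => by
    simpa [Z, Z'] using (hasDerivAt_sum_mul_exp_line 1 a v t).const_add 1
  have hZ' : ∀ t, HasDerivAt Z' (Z'' t) t := hasDerivAt_sum_mul_exp_line v a v
  have hvar : ∀ t, (Z'' t * Z t - Z' t * Z' t) / Z t ^ 2 ≤ ∑ i, v i ^ 2 := fun t => by
    have hZ'' : Z'' t ≤ (∑ i, v i ^ 2) * Z t := by
      simpa [Z, Z'', ← sq] using sum_sq_mul_exp_le v fun i => a i + t * v i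
    rw [div_le_iff₀ (by positivity)]
    nlinarith [sq_nonneg (Z' t), hZ_pos t]
  have key := sub_sub_deriv_mul_le_of_hasDerivAt_le (fun t => (hZ t).log (hZ_pos t).ne')
    (fun t => (hZ' t).div (hZ t) (hZ_pos t).ne') hvar zero_le_one
  have hZ0 : Z 0 = 1 + ∑ i, exp (a i) := by simp [Z]
  have hZ1 : Z 1 = 1 + ∑ i, exp (b i) := by simp [Z, v]
  have hZ'0 : Z' 0 / Z 0 = ∑ i, exp (a i) / (1 + ∑ s, exp (a s)) * v i := by
    rw [hZ0, Finset.sum_div]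
    exact Finset.sum_congr rfl fun i _ => by simp only [zero_mul, add_zero]; ring
  rw [hZ1, hZ'0, hZ0] at key
  linarith

end LogSumExp

theorem stmt_12_general (k : ℕ) (a b : EuclideanSpace ℝ (Fin (k - 1))) :
    Phi b - Phi a - ∑ i, sig a i * (b i - a i) ≤ (1 / 2) * ‖b - a‖ ^ 2 := by
  simpa [Phi, sig, EuclideanSpace.real_norm_sq_eq] using log_one_add_sum_exp_sub_le a b

/-- Upper half of Lemma 2: the Bregman divergence of `Φ` is at most half the
squared Euclidean distance. -/
theorem stmt_12 (k : ℕ) (hk : 2 ≤ k) (a b : EuclideanSpace ℝ (Fin (k - 1))) :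
    Phi b - Phi a - ∑ i, sig a i * (b i - a i) ≤ (1 / 2) * ‖b - a‖ ^ 2 :=
  stmt_12_general k a b
end

section
/- Let k ≥ 2 be an integer, define Φ : ℝ^{k−1} → ℝ by Φ(x) = log(1 + Σ_{s=1}^{k−1} exp(x_s)) and σ : ℝ^{k−1} → ℝ^{k−1} by σ(x)_i = exp(x_i) / (1 + Σ_{s=1}^{k−1} exp(x_s)). For a, v ∈ ℝ^{k−1} let Q_a(v) = Σ_{i=1}^{k−1} σ(a)_i v_i² − ( Σ_{i=1}^{k−1} σ(a)_i v_i )² denote the Hessian quadratic form of Φ at a. Then for all a, v ∈ ℝ^{k−1}: Φ(a + v) − Φ(a) − ⟨σ(a), v⟩ ≥ (1/2) · exp(−5 ‖v‖₂) · Q_a(v). -/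
/-- The Hessian quadratic form of `Φ` at `a` evaluated at `v`:
`Q_a(v) = Σ_i σ(a)_i v_i² − (Σ_i σ(a)_i v_i)²`. -/
noncomputable def hessQ {m : ℕ} (a v : EuclideanSpace ℝ (Fin m)) : ℝ :=
  ∑ i, sig a i * (v i) ^ 2 - (∑ i, sig a i * v i) ^ 2

open Real Finset

lemma exp_le_cubic_of_nonneg_of_le_one {u : ℝ} (h0 : 0 ≤ u) (h1 : u ≤ 1) :
    exp u ≤ 1 + u + u ^ 2 / 2 + 2 / 9 * u ^ 3 := by
  have h := abs_le.mp (exp_bound (x := u) (by rwa [abs_of_nonneg h0]) (n := 3) (by norm_num))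
  norm_num [sum_range_succ, Nat.factorial, abs_of_nonneg h0] at h
  linarith

lemma one_add_add_sq_mul_exp_neg_abs_le_exp (w : ℝ) :
    1 + w + w ^ 2 / 2 * exp (-|w|) ≤ exp w := by
  rcases le_or_gt 0 w with hw | hw
  · have : exp (-|w|) ≤ 1 := exp_le_one_iff.mpr (by simp)
    nlinarith [quadratic_le_exp_of_nonneg hw, sq_nonneg w]
  · obtain ⟨u, hu, rfl⟩ : ∃ u, 0 < u ∧ w = -u := ⟨-w, by linarith, by ring⟩
    rw [abs_neg, abs_of_pos hu]
    -- multiplied by `exp u`, the claim reads `(1 - u) * exp u + u ^ 2 / 2 ≤ 1`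
    have key : u ^ 2 / 2 ≤ 1 + (u - 1) * exp u := by
      rcases le_or_gt u 1 with hu1 | hu1
      · nlinarith [exp_le_cubic_of_nonneg_of_le_one hu.le hu1]
      · nlinarith [add_one_le_exp u]
    have hinv : exp u * exp (-u) = 1 := by rw [← exp_add]; simp
    nlinarith [exp_pos (-u)]

lemma exp_neg_mul_le_log_one_add {x M : ℝ} (hM : 0 ≤ M) (hx : 0 ≤ x) (hxM : x ≤ M ^ 2 / 2) :
    exp (-M) * x ≤ log (1 + x) := by
  have hpos : 0 < 1 + x := by linarith
  have hle : 1 + x ≤ exp M := by nlinarith [quadratic_le_exp_of_nonneg hM]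
  calc exp (-M) * x ≤ x / (1 + x) := by
        rw [exp_neg, le_div_iff₀ hpos, inv_mul_eq_div, div_mul_eq_mul_div, div_le_iff₀ (exp_pos M)]
        exact mul_le_mul_of_nonneg_left hle hx
    _ = 1 - (1 + x)⁻¹ := by field_simp; ring
    _ ≤ log (1 + x) := one_sub_inv_le_log_of_pos hpos

section SubProbability

variable {ι : Type*} [Fintype ι] {p w : ι → ℝ} {M : ℝ}

lemma sum_mul_sq_sub_sq_eq (p w : ι → ℝ) :
    ∑ i, p i * w i ^ 2 - (∑ i, p i * w i) ^ 2
      = (1 - ∑ i, p i) * (∑ i, p i * w i) ^ 2 + ∑ i, p i * (w i - ∑ j, p j * w j) ^ 2 := by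
  generalize hE : ∑ j, p j * w j = E
  have : ∑ i, p i * (w i - E) ^ 2
      = ∑ i, p i * w i ^ 2 - 2 * E * ∑ i, p i * w i + E ^ 2 * ∑ i, p i := by
    rw [mul_sum, mul_sum, ← sum_sub_distrib, ← sum_add_distrib]
    exact sum_congr rfl fun i _ => by ring
  rw [this, hE]; ring

lemma abs_sum_mul_le (hp : ∀ i, 0 ≤ p i) (hsum : ∑ i, p i ≤ 1) (hM : 0 ≤ M)
    (hw : ∀ i, |w i| ≤ M) : |∑ i, p i * w i| ≤ M :=
  calc |∑ i, p i * w i| ≤ ∑ i, p i * M := by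
        refine (abs_sum_le_sum_abs _ _).trans (sum_le_sum fun i _ => ?_)
        rw [abs_mul, abs_of_nonneg (hp i)]
        exact mul_le_mul_of_nonneg_left (hw i) (hp i)
    _ ≤ M := by rw [← sum_mul]; exact mul_le_of_le_one_left hM hsum

lemma sum_mul_sq_sub_sq_le (hp : ∀ i, 0 ≤ p i) (hsum : ∑ i, p i ≤ 1) (hw : ∀ i, |w i| ≤ M) :
    ∑ i, p i * w i ^ 2 - (∑ i, p i * w i) ^ 2 ≤ M ^ 2 := by
  have hsq : ∑ i, p i * w i ^ 2 ≤ ∑ i, p i * M ^ 2 := sum_le_sum fun i _ =>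
    mul_le_mul_of_nonneg_left (sq_le_sq' (abs_le.mp (hw i)).1 (abs_le.mp (hw i)).2) (hp i)
  rw [← sum_mul] at hsq
  nlinarith [sq_nonneg (∑ i, p i * w i), sq_nonneg M]

lemma sum_mul_sq_sub_sq_nonneg (hp : ∀ i, 0 ≤ p i) (hsum : ∑ i, p i ≤ 1) :
    0 ≤ ∑ i, p i * w i ^ 2 - (∑ i, p i * w i) ^ 2 := by
  rw [sum_mul_sq_sub_sq_eq]
  have := sum_nonneg fun i (_ : i ∈ univ) => mul_nonneg (hp i) (sq_nonneg (w i - ∑ j, p j * w j))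
  nlinarith [sq_nonneg (∑ i, p i * w i)]

lemma one_add_le_sum_mul_exp_sub (hp : ∀ i, 0 ≤ p i) (hsum : ∑ i, p i ≤ 1) (hM : 0 ≤ M)
    (hw : ∀ i, |w i| ≤ M) :
    1 + exp (-(2 * M)) / 2 * (∑ i, p i * w i ^ 2 - (∑ i, p i * w i) ^ 2)
      ≤ (1 - ∑ i, p i) * exp (-∑ i, p i * w i) + ∑ i, p i * exp (w i - ∑ j, p j * w j) := by
  have hE := abs_sum_mul_le hp hsum hM hw
  rw [sum_mul_sq_sub_sq_eq]
  set E := ∑ j, p j * w j with hEdef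
  set c := exp (-(2 * M))
  have taylor : ∀ x, |x| ≤ 2 * M → 1 + x + x ^ 2 / 2 * c ≤ exp x := fun x hx =>
    le_trans (by gcongr; exact exp_le_exp.2 (by linarith)) (one_add_add_sq_mul_exp_neg_abs_le_exp x)
  have h0 : (1 - ∑ i, p i) * (1 + -E + (-E) ^ 2 / 2 * c) ≤ (1 - ∑ i, p i) * exp (-E) :=
    mul_le_mul_of_nonneg_left (taylor _ (by rw [abs_neg]; linarith)) (sub_nonneg.2 hsum)
  have hsum_le : ∑ i, p i * (1 + (w i - E) + (w i - E) ^ 2 / 2 * c)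
      ≤ ∑ i, p i * exp (w i - E) := sum_le_sum fun i _ =>
    mul_le_mul_of_nonneg_left (taylor _ (by linarith [abs_sub (w i) E, hw i])) (hp i)
  have hexpand : ∑ i, p i * (1 + (w i - E) + (w i - E) ^ 2 / 2 * c)
      = ∑ i, p i + (∑ i, p i * w i - E * ∑ i, p i) + c / 2 * ∑ i, p i * (w i - E) ^ 2 := by
    rw [mul_sum, mul_sum, ← sum_sub_distrib, ← sum_add_distrib, ← sum_add_distrib]
    exact sum_congr rfl fun i _ => by ring
  rw [← hEdef] at hexpand
  linarith

theorem exp_neg_mul_sum_mul_sq_sub_sq_le_log_sub (hp : ∀ i, 0 ≤ p i) (hsum : ∑ i, p i ≤ 1)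
    (hM : 0 ≤ M) (hw : ∀ i, |w i| ≤ M) :
    exp (-(3 * M)) / 2 * (∑ i, p i * w i ^ 2 - (∑ i, p i * w i) ^ 2)
      ≤ log (1 - ∑ i, p i + ∑ i, p i * exp (w i)) - ∑ i, p i * w i := by
  have hT := one_add_le_sum_mul_exp_sub hp hsum hM hw
  have hV := sum_mul_sq_sub_sq_nonneg (w := w) hp hsum
  have hVM := sum_mul_sq_sub_sq_le hp hsum hw
  set E := ∑ i, p i * w i
  set V := ∑ i, p i * w i ^ 2 - E ^ 2
  have hshift : (1 - ∑ i, p i) * exp (-E) + ∑ i, p i * exp (w i - E)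
      = exp (-E) * (1 - ∑ i, p i + ∑ i, p i * exp (w i)) := by
    rw [mul_add, mul_sum, mul_comm]
    congr 1
    exact sum_congr rfl fun i _ => by rw [sub_eq_add_neg, exp_add]; ring
  have hc : exp (-(2 * M)) ≤ 1 := exp_le_one_iff.2 (by linarith)
  have hx : exp (-(2 * M)) / 2 * V ≤ M ^ 2 / 2 := by nlinarith
  have hpos : 0 < 1 - ∑ i, p i + ∑ i, p i * exp (w i) := by
    have : 0 < exp (-E) * (1 - ∑ i, p i + ∑ i, p i * exp (w i)) := by
      rw [← hshift]; nlinarith [exp_pos (-(2 * M))]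
    exact pos_of_mul_pos_right this (exp_pos _).le
  calc exp (-(3 * M)) / 2 * V = exp (-M) * (exp (-(2 * M)) / 2 * V) := by
        rw [show -(3 * M) = -M + -(2 * M) by ring, exp_add]; ring
    _ ≤ log (1 + exp (-(2 * M)) / 2 * V) :=
        exp_neg_mul_le_log_one_add hM (by positivity) hx
    _ ≤ log (exp (-E) * (1 - ∑ i, p i + ∑ i, p i * exp (w i))) :=
        log_le_log (by positivity) (hshift ▸ hT)
    _ = _ := by rw [log_mul (exp_pos _).ne' hpos.ne', log_exp]; ring

end SubProbability

section Softmax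

variable {m : ℕ} (a : EuclideanSpace ℝ (Fin m))

lemma sig_nonneg (i : Fin m) : 0 ≤ sig a i := by unfold sig; positivity

lemma one_sub_sum_sig : 1 - ∑ i, sig a i = (1 + ∑ s, exp (a s))⁻¹ := by
  have hS : 0 < 1 + ∑ s, exp (a s) := by positivity
  simp only [sig, ← sum_div]
  field_simp
  ring

lemma sum_sig_le_one : ∑ i, sig a i ≤ 1 := by
  have h := one_sub_sum_sig a
  have : 0 ≤ (1 + ∑ s, exp (a s))⁻¹ := by positivity
  linarith

lemma Phi_add_sub_Phi (v : EuclideanSpace ℝ (Fin m)) :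
    Phi (a + v) - Phi a = log (1 - ∑ i, sig a i + ∑ i, sig a i * exp (v i)) := by
  have hS : 0 < 1 + ∑ s, exp (a s) := by positivity
  have : 1 - ∑ i, sig a i + ∑ i, sig a i * exp (v i)
      = (1 + ∑ s, exp (a s + v s)) / (1 + ∑ s, exp (a s)) := by
    simp only [sig, exp_add, div_mul_eq_mul_div, ← sum_div]
    field_simp
    ring
  rw [this, log_div (by positivity) hS.ne']
  rfl

end Softmax

theorem stmt_13_general (k : ℕ) (a v : EuclideanSpace ℝ (Fin (k - 1))) :
    (1 / 2) * Real.exp (-(5 * ‖v‖)) * hessQ a v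
      ≤ Phi (a + v) - Phi a - ∑ i, sig a i * v i := by
  have hv : ∀ i, |v i| ≤ ‖v‖ := fun i => by simpa using PiLp.norm_apply_le v i
  have hQ : 0 ≤ hessQ a v := sum_mul_sq_sub_sq_nonneg (sig_nonneg a) (sum_sig_le_one a)
  have h53 : exp (-(5 * ‖v‖)) ≤ exp (-(3 * ‖v‖)) := exp_le_exp.2 (by linarith [norm_nonneg v])
  calc (1 / 2) * exp (-(5 * ‖v‖)) * hessQ a v ≤ exp (-(3 * ‖v‖)) / 2 * hessQ a v := by
        nlinarith
    _ ≤ Phi (a + v) - Phi a - ∑ i, sig a i * v i := by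
        rw [Phi_add_sub_Phi]
        exact exp_neg_mul_sum_mul_sq_sub_sq_le_log_sub (sig_nonneg a) (sum_sig_le_one a)
          (norm_nonneg v) hv

/-- Intermediate lower bound in the proof of Lemma 2:
`Φ(a + v) − Φ(a) − ⟨σ(a), v⟩ ≥ (1/2) e^{−5‖v‖} Q_a(v)`. -/
theorem stmt_13 (k : ℕ) (hk : 2 ≤ k) (a v : EuclideanSpace ℝ (Fin (k - 1))) :
    (1 / 2) * Real.exp (-(5 * ‖v‖)) * hessQ a v
      ≤ Phi (a + v) - Phi a - ∑ i, sig a i * v i :=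
  stmt_13_general k a v
end

section
/- Let k ≥ 2 be an integer, define Φ : ℝ^{k−1} → ℝ by Φ(x) = log(1 + Σ_{s=1}^{k−1} exp(x_s)) and σ : ℝ^{k−1} → ℝ^{k−1} by σ(x)_i = exp(x_i) / (1 + Σ_{s=1}^{k−1} exp(x_s)). For a ∈ ℝ^{k−1}, let λ_min(a) denote the smallest eigenvalue of the Hessian matrix diag(σ(a)) − σ(a)σ(a)ᵀ of Φ at a (equivalently, the infimum over unit vectors u ∈ ℝ^{k−1} of Q_a(u) = Σ_i σ(a)_i u_i² − (Σ_i σ(a)_i u_i)²). Then for all a, b ∈ ℝ^{k−1}, with q₀ = max(‖a‖₂, ‖b‖₂): Φ(b) − Φ(a) − ⟨σ(a), b − a⟩ ≥ (1/2) · λ_min(a) · exp(−10 q₀) · ‖b − a‖₂². -/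
/-- The smallest eigenvalue of the Hessian `diag(σ(a)) − σ(a)σ(a)ᵀ` of `Φ` at `a`:
the infimum of its quadratic form over unit vectors. -/
noncomputable def lamMin {m : ℕ} (a : EuclideanSpace ℝ (Fin m)) : ℝ :=
  ⨅ u : Metric.sphere (0 : EuclideanSpace ℝ (Fin m)) 1, hessQ a (u : EuclideanSpace ℝ (Fin m))

/-!
Along the segment `x_t = a + t (b - a)` the function `g t = Φ x_t` has `g'' t = Q_{x_t}(b - a)`, so
the Bregman divergence `g 1 - g 0 - g' 0` is at least half the minimum of `g''` on `[0, 1]`.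
Completing the square, `Q_x(v) = min_c (Σ_i σ(x)_i (v_i - c)² + c² / Z x)` with `Z x = 1 + Σ_s exp(x_s)`.
Moving from `a` to `x` changes each of these weights by a factor at least `exp (-2‖x - a‖)`, and
`‖x_t - a‖ ≤ 2 q₀`; hence `Q_{x_t}(v) ≥ e^{-4 q₀} Q_a(v) ≥ e^{-10 q₀} λ_min(a) ‖v‖²`.
-/

open Real Set Finset

theorem monotoneOn_Icc_of_hasDerivAt_nonneg {g g' : ℝ → ℝ} {a b : ℝ}
    (hg : ∀ t, HasDerivAt g (g' t) t) (hg' : ∀ t ∈ Ioo a b, 0 ≤ g' t) :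
    MonotoneOn g (Icc a b) :=
  monotoneOn_of_hasDerivWithinAt_nonneg (convex_Icc a b)
    (fun t _ => (hg t).continuousAt.continuousWithinAt)
    (fun t _ => (hg t).hasDerivWithinAt) (by simpa only [interior_Icc] using hg')

theorem half_le_sub_sub_deriv_of_le_deriv2 {f f' f'' : ℝ → ℝ} {L : ℝ}
    (hf : ∀ t, HasDerivAt f (f' t) t) (hf' : ∀ t, HasDerivAt f' (f'' t) t)
    (hL : ∀ t ∈ Ioo (0 : ℝ) 1, L ≤ f'' t) :
    L / 2 ≤ f 1 - f 0 - f' 0 := by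
  have slope : ∀ t ∈ Icc (0 : ℝ) 1, f' 0 ≤ f' t - L * t := by
    intro t ht
    have hmono := monotoneOn_Icc_of_hasDerivAt_nonneg
      (fun t => (hf' t).fun_sub ((hasDerivAt_id' t).const_mul L)) (fun t ht => by
        simpa using hL t ht)
    simpa using hmono (left_mem_Icc.2 zero_le_one) ht ht.1
  have hmono := monotoneOn_Icc_of_hasDerivAt_nonneg (a := 0) (b := 1)
    (g := fun t => f t - t * f' 0 - L / 2 * t ^ 2) (g' := fun t => f' t - f' 0 - L * t)
    (fun t => (((hf t).fun_sub ((hasDerivAt_id' t).mul_const (f' 0))).fun_sub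
      ((hasDerivAt_pow 2 t).const_mul (L / 2))).congr_deriv (by norm_num; ring))
    (fun t ht => by linarith [slope t (Ioo_subset_Icc_self ht)])
  have := hmono (left_mem_Icc.2 zero_le_one) (right_mem_Icc.2 zero_le_one) zero_le_one
  simp only at this
  linarith

theorem sum_mul_sub_sq_add_one_sub_sum_mul_sq {ι : Type*} [Fintype ι] (p v : ι → ℝ) (c : ℝ) :
    ∑ i, p i * (v i - c) ^ 2 + (1 - ∑ i, p i) * c ^ 2
      = (∑ i, p i * v i ^ 2 - (∑ i, p i * v i) ^ 2) + (c - ∑ i, p i * v i) ^ 2 := by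
  have expand : ∀ i, p i * (v i - c) ^ 2 = p i * v i ^ 2 - 2 * c * (p i * v i) + c ^ 2 * p i :=
    fun i => by ring
  simp only [expand, sum_add_distrib, sum_sub_distrib, ← mul_sum]
  ring

section Softmax

variable {m : ℕ}

noncomputable def partitionFn (x : EuclideanSpace ℝ (Fin m)) : ℝ :=
  1 + ∑ s, exp (x s)

theorem sig_eq (x : EuclideanSpace ℝ (Fin m)) (i : Fin m) : sig x i = exp (x i) / partitionFn x :=
  rfl

theorem partitionFn_pos (x : EuclideanSpace ℝ (Fin m)) : 0 < partitionFn x := by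
  unfold partitionFn; positivity

theorem sig_pos (x : EuclideanSpace ℝ (Fin m)) (i : Fin m) : 0 < sig x i :=
  div_pos (exp_pos _) (partitionFn_pos x)

theorem one_sub_sum_sig_s14 (x : EuclideanSpace ℝ (Fin m)) :
    1 - ∑ i, sig x i = (partitionFn x)⁻¹ := by
  have := (partitionFn_pos x).ne'
  simp only [sig, ← sum_div]
  unfold partitionFn at *
  field_simp
  ring

theorem hessQ_add_sq_eq (x v : EuclideanSpace ℝ (Fin m)) (c : ℝ) :
    hessQ x v + (c - ∑ i, sig x i * v i) ^ 2
      = ∑ i, sig x i * (v i - c) ^ 2 + (partitionFn x)⁻¹ * c ^ 2 := by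
  rw [← one_sub_sum_sig_s14, sum_mul_sub_sq_add_one_sub_sum_mul_sq, hessQ]

theorem hessQ_eq (x v : EuclideanSpace ℝ (Fin m)) :
    hessQ x v = ∑ i, sig x i * (v i - ∑ j, sig x j * v j) ^ 2
      + (partitionFn x)⁻¹ * (∑ j, sig x j * v j) ^ 2 := by
  simpa using hessQ_add_sq_eq x v (∑ j, sig x j * v j)

theorem hessQ_nonneg (x v : EuclideanSpace ℝ (Fin m)) : 0 ≤ hessQ x v := by
  rw [hessQ_eq]
  have := partitionFn_pos x
  exact add_nonneg (sum_nonneg fun i _ => mul_nonneg (sig_pos x i).le (sq_nonneg _))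
    (by positivity)

theorem abs_apply_sub_le_norm_sub (x a : EuclideanSpace ℝ (Fin m)) (i : Fin m) :
    |x i - a i| ≤ ‖x - a‖ := by
  simpa using PiLp.norm_apply_le (x - a) i

theorem partitionFn_le (x a : EuclideanSpace ℝ (Fin m)) :
    partitionFn x ≤ exp ‖x - a‖ * partitionFn a := by
  have term_le : ∀ s, exp (x s) ≤ exp ‖x - a‖ * exp (a s) := fun s => by
    rw [← exp_add, exp_le_exp]
    linarith [(abs_le.1 (abs_apply_sub_le_norm_sub x a s)).2]
  have one_le : 1 ≤ exp ‖x - a‖ := one_le_exp (norm_nonneg _)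
  unfold partitionFn
  rw [mul_add, mul_one, mul_sum]
  exact add_le_add one_le (sum_le_sum fun s _ => term_le s)

theorem exp_neg_two_mul_norm_sub_mul_sig_le (x a : EuclideanSpace ℝ (Fin m)) (i : Fin m) :
    exp (-(2 * ‖x - a‖)) * sig a i ≤ sig x i := by
  have num_le : exp (-‖x - a‖) * exp (a i) ≤ exp (x i) := by
    rw [← exp_add, exp_le_exp]
    linarith [(abs_le.1 (abs_apply_sub_le_norm_sub x a i)).1]
  have hx := partitionFn_pos x
  have ha := partitionFn_pos a
  calc exp (-(2 * ‖x - a‖)) * sig a i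
      = exp (-‖x - a‖) * exp (a i) / (exp ‖x - a‖ * partitionFn a) := by
        rw [sig, ← partitionFn, two_mul, neg_add, exp_add, exp_neg]
        field_simp
    _ ≤ exp (x i) / partitionFn x :=
        div_le_div₀ (exp_pos _).le num_le hx (partitionFn_le x a)

theorem exp_neg_two_mul_norm_sub_mul_inv_partitionFn_le (x a : EuclideanSpace ℝ (Fin m)) :
    exp (-(2 * ‖x - a‖)) * (partitionFn a)⁻¹ ≤ (partitionFn x)⁻¹ := by
  have hx := partitionFn_pos x
  have ha := partitionFn_pos a
  calc exp (-(2 * ‖x - a‖)) * (partitionFn a)⁻¹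
      ≤ exp (-‖x - a‖) * (partitionFn a)⁻¹ := by
        gcongr; linarith [norm_nonneg (x - a)]
    _ = (exp ‖x - a‖ * partitionFn a)⁻¹ := by rw [exp_neg, mul_inv]
    _ ≤ (partitionFn x)⁻¹ := inv_anti₀ hx (partitionFn_le x a)

theorem exp_neg_two_mul_norm_sub_mul_hessQ_le (x a v : EuclideanSpace ℝ (Fin m)) :
    exp (-(2 * ‖x - a‖)) * hessQ a v ≤ hessQ x v := by
  set e := exp (-(2 * ‖x - a‖))
  set c := ∑ j, sig x j * v j
  have he : 0 ≤ e := (exp_pos _).le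
  have weights : e * (∑ i, sig a i * (v i - c) ^ 2 + (partitionFn a)⁻¹ * c ^ 2)
      ≤ ∑ i, sig x i * (v i - c) ^ 2 + (partitionFn x)⁻¹ * c ^ 2 := by
    rw [mul_add, mul_sum]
    refine add_le_add (sum_le_sum fun i _ => ?_) ?_
    · rw [← mul_assoc]
      exact mul_le_mul_of_nonneg_right (exp_neg_two_mul_norm_sub_mul_sig_le x a i) (sq_nonneg _)
    · rw [← mul_assoc]
      exact mul_le_mul_of_nonneg_right
        (exp_neg_two_mul_norm_sub_mul_inv_partitionFn_le x a) (sq_nonneg _)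
  rw [← hessQ_add_sq_eq, ← hessQ_add_sq_eq x v c, sub_self, zero_pow two_ne_zero, add_zero]
    at weights
  nlinarith [mul_nonneg he (sq_nonneg (c - ∑ i, sig a i * v i))]

theorem hessQ_smul (x v : EuclideanSpace ℝ (Fin m)) (t : ℝ) :
    hessQ x (t • v) = t ^ 2 * hessQ x v := by
  simp only [hessQ, PiLp.smul_apply, smul_eq_mul, mul_pow, mul_left_comm (sig x _),
    ← mul_sum]
  ring

theorem lamMin_nonneg (a : EuclideanSpace ℝ (Fin m)) : 0 ≤ lamMin a :=
  Real.iInf_nonneg fun u => hessQ_nonneg a u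

theorem lamMin_mul_norm_sq_le_hessQ (a v : EuclideanSpace ℝ (Fin m)) :
    lamMin a * ‖v‖ ^ 2 ≤ hessQ a v := by
  rcases eq_or_ne v 0 with rfl | hv
  · simpa using hessQ_nonneg a 0
  have hnv : 0 < ‖v‖ := norm_pos_iff.2 hv
  have hu : ‖v‖⁻¹ • v ∈ Metric.sphere (0 : EuclideanSpace ℝ (Fin m)) 1 := by
    rw [mem_sphere_zero_iff_norm, norm_smul, norm_inv, norm_norm, inv_mul_cancel₀ hnv.ne']
  have hle : lamMin a ≤ ‖v‖⁻¹ ^ 2 * hessQ a v := by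
    rw [← hessQ_smul]
    exact ciInf_le ⟨0, by rintro _ ⟨u, rfl⟩; exact hessQ_nonneg a u⟩ (⟨_, hu⟩ : Metric.sphere _ _)
  calc lamMin a * ‖v‖ ^ 2 ≤ ‖v‖⁻¹ ^ 2 * hessQ a v * ‖v‖ ^ 2 := by gcongr
    _ = hessQ a v := by field_simp

theorem hasDerivAt_apply_add_smul (x v : EuclideanSpace ℝ (Fin m)) (i : Fin m) (t : ℝ) :
    HasDerivAt (fun s : ℝ => (x + s • v) i) (v i) t := by
  simpa using ((hasDerivAt_id' t).mul_const (v i)).const_add (x i)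

theorem hasDerivAt_partitionFn_add_smul (x v : EuclideanSpace ℝ (Fin m)) (t : ℝ) :
    HasDerivAt (fun s : ℝ => partitionFn (x + s • v))
      (partitionFn (x + t • v) * ∑ i, sig (x + t • v) i * v i) t := by
  have hZ := (partitionFn_pos (x + t • v)).ne'
  refine ((HasDerivAt.fun_sum (u := univ) fun i _ =>
    (hasDerivAt_apply_add_smul x v i t).exp).const_add 1).congr_deriv ?_
  rw [mul_sum]
  exact sum_congr rfl fun i _ => by rw [sig_eq]; field_simp

theorem hasDerivAt_Phi_add_smul (x v : EuclideanSpace ℝ (Fin m)) (t : ℝ) :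
    HasDerivAt (fun s : ℝ => Phi (x + s • v)) (∑ i, sig (x + t • v) i * v i) t := by
  have hZ := (partitionFn_pos (x + t • v)).ne'
  refine ((hasDerivAt_partitionFn_add_smul x v t).log hZ).congr_deriv ?_
  field_simp

theorem hasDerivAt_sig_add_smul (x v : EuclideanSpace ℝ (Fin m)) (i : Fin m) (t : ℝ) :
    HasDerivAt (fun s : ℝ => sig (x + s • v) i)
      (sig (x + t • v) i * (v i - ∑ j, sig (x + t • v) j * v j)) t := by
  have hZ := (partitionFn_pos (x + t • v)).ne'
  refine ((hasDerivAt_apply_add_smul x v i t).exp.div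
    (hasDerivAt_partitionFn_add_smul x v t) hZ).congr_deriv ?_
  rw [sig_eq (x + t • v) i]
  field_simp

theorem hasDerivAt_sum_sig_mul_add_smul (x v : EuclideanSpace ℝ (Fin m)) (t : ℝ) :
    HasDerivAt (fun s : ℝ => ∑ i, sig (x + s • v) i * v i) (hessQ (x + t • v) v) t := by
  refine (HasDerivAt.fun_sum fun i _ =>
    (hasDerivAt_sig_add_smul x v i t).mul_const (v i)).congr_deriv ?_
  simp only [hessQ, mul_sub, sub_mul, mul_assoc, ← sq, sum_sub_distrib,
    mul_left_comm (sig _ _) (∑ j, _), ← mul_sum]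

end Softmax

theorem stmt_14_general (k : ℕ) (a b : EuclideanSpace ℝ (Fin (k - 1))) :
    (1 / 2) * lamMin a * Real.exp (-(10 * max ‖a‖ ‖b‖)) * ‖b - a‖ ^ 2
      ≤ Phi b - Phi a - ∑ i, sig a i * (b i - a i) := by
  set q := max ‖a‖ ‖b‖
  have hq : ‖a‖ ≤ q ∧ ‖b‖ ≤ q := ⟨le_max_left _ _, le_max_right _ _⟩
  have curvature : ∀ t ∈ Ioo (0 : ℝ) 1,
      lamMin a * exp (-(10 * q)) * ‖b - a‖ ^ 2 ≤ hessQ (a + t • (b - a)) (b - a) := by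
    intro t ht
    have hdist : ‖a + t • (b - a) - a‖ ≤ 2 * q := by
      rw [add_sub_cancel_left, norm_smul, Real.norm_of_nonneg ht.1.le]
      calc t * ‖b - a‖ ≤ ‖b - a‖ := mul_le_of_le_one_left (norm_nonneg _) ht.2.le
        _ ≤ ‖b‖ + ‖a‖ := norm_sub_le _ _
        _ ≤ 2 * q := by linarith
    calc lamMin a * exp (-(10 * q)) * ‖b - a‖ ^ 2
        ≤ exp (-(2 * ‖a + t • (b - a) - a‖)) * (lamMin a * ‖b - a‖ ^ 2) := by
          rw [mul_right_comm, mul_comm]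
          exact mul_le_mul_of_nonneg_right (exp_le_exp.2 (by linarith [norm_nonneg a]))
            (mul_nonneg (lamMin_nonneg a) (sq_nonneg _))
      _ ≤ exp (-(2 * ‖a + t • (b - a) - a‖)) * hessQ a (b - a) := by
          gcongr; exact lamMin_mul_norm_sq_le_hessQ a (b - a)
      _ ≤ hessQ (a + t • (b - a)) (b - a) := exp_neg_two_mul_norm_sub_mul_hessQ_le _ _ _
  have taylor := half_le_sub_sub_deriv_of_le_deriv2 (hasDerivAt_Phi_add_smul a (b - a))
    (hasDerivAt_sum_sig_mul_add_smul a (b - a)) curvature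
  simp only [zero_smul, add_zero, one_smul, add_sub_cancel, PiLp.sub_apply] at taylor
  linarith

/-- Lower half of Lemma 2: the Bregman divergence of `Φ` is bounded below by
`(1/2) λ_min(a) e^{−10 q₀} ‖b − a‖²` with `q₀ = max(‖a‖, ‖b‖)`. -/
theorem stmt_14 (k : ℕ) (hk : 2 ≤ k) (a b : EuclideanSpace ℝ (Fin (k - 1))) :
    (1 / 2) * lamMin a * Real.exp (-(10 * max ‖a‖ ‖b‖)) * ‖b - a‖ ^ 2
      ≤ Phi b - Phi a - ∑ i, sig a i * (b i - a i) :=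
  stmt_14_general k a b
end

section
/- Let p ≥ 1 be an integer, R > 0, and let F : ℝ^p → ℝ be a three times continuously differentiable convex function such that for all u, v ∈ ℝ^p, the function g(t) = F(u + t v) satisfies |g'''(t)| ≤ R ‖v‖₂ g''(t) for all t ∈ ℝ. Then for all w ∈ ℝ^p and all v ∈ ℝ^p with v ≠ 0: F(w + v) ≤ F(w) + ⟨∇F(w), v⟩ + ( vᵀ ∇²F(w) v / (R² ‖v‖₂²) ) · ( exp(R ‖v‖₂) − R ‖v‖₂ − 1 ), where ∇²F(w) denotes the Hessian of F at w and vᵀ ∇²F(w) v is the second directional derivative (d²/dt²)|_{t=0} F(w + t v). -/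
/-!
Restricted to the line `g s = F (w + s • v)`, self-concordance gives `g''' ≤ c g''` with
`c = R ‖v‖`, so Grönwall bounds `g''(s)` by `g''(0) e^{cs}` for `s ≥ 0`. Integrating this bound
twice from `0` yields the exponential Taylor bound on `g`, which at `s = 1` is the claim.
-/

open Real Set

section ComparisonOnIcc

variable {f B B' : ℝ → ℝ} {c t : ℝ}

theorem le_mul_exp_of_deriv_le (hf : Differentiable ℝ f)
    (hbound : ∀ s ∈ Icc 0 t, deriv f s ≤ c * f s) :
    ∀ s ∈ Icc 0 t, f s ≤ f 0 * exp (c * s) := by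
  intro s hs
  simpa [gronwallBound_ε0] using le_gronwallBound_of_liminf_deriv_right_le (ε := 0)
    hf.continuous.continuousOn
    (fun x _ _ hr => (hf x).hasDerivAt.hasDerivWithinAt.liminf_right_slope_le hr) le_rfl
    (fun x hx => by simpa using hbound x (Ico_subset_Icc_self hx)) s hs

theorem image_le_of_deriv_le_deriv_boundary (hf : Differentiable ℝ f)
    (hB : ∀ s, HasDerivAt B (B' s) s) (h0 : f 0 ≤ B 0) (hle : ∀ s ∈ Icc 0 t, deriv f s ≤ B' s) :
    ∀ s ∈ Icc 0 t, f s ≤ B s := fun _ hs =>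
  image_le_of_deriv_right_le_deriv_boundary hf.continuous.continuousOn
    (fun x _ => (hf x).hasDerivAt.hasDerivWithinAt) h0
    (fun x _ => (hB x).continuousAt.continuousWithinAt) (fun x _ => (hB x).hasDerivWithinAt)
    (fun x hx => hle x (Ico_subset_Icc_self hx)) hs

end ComparisonOnIcc

theorem le_taylor_exp_of_iteratedDeriv_three_le {g : ℝ → ℝ} {c t : ℝ} (hc : 0 < c) (ht : 0 ≤ t)
    (hg : ContDiff ℝ 3 g)
    (hsc : ∀ s ∈ Icc 0 t, iteratedDeriv 3 g s ≤ c * iteratedDeriv 2 g s) :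
    g t ≤ g 0 + deriv g 0 * t + iteratedDeriv 2 g 0 / c ^ 2 * (exp (c * t) - c * t - 1) := by
  set a := iteratedDeriv 2 g 0
  have hd0 : Differentiable ℝ g := by simpa using hg.differentiable_iteratedDeriv 0 (by norm_num)
  have hd1 : Differentiable ℝ (deriv g) := by
    simpa using hg.differentiable_iteratedDeriv 1 (by norm_num)
  have hdd : deriv (deriv g) = iteratedDeriv 2 g := by rw [iteratedDeriv_succ, iteratedDeriv_one]
  have hexp (s : ℝ) : HasDerivAt (fun s => exp (c * s)) (c * exp (c * s)) s := by
    simpa [mul_comm] using ((hasDerivAt_id s).const_mul c).exp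
  have hg''_le : ∀ s ∈ Icc 0 t, iteratedDeriv 2 g s ≤ a * exp (c * s) :=
    le_mul_exp_of_deriv_le (hg.differentiable_iteratedDeriv 2 (by norm_num))
      fun s hs => by simpa [iteratedDeriv_succ] using hsc s hs
  have hg'_le : ∀ s ∈ Icc 0 t, deriv g s ≤ deriv g 0 + a / c * (exp (c * s) - 1) := by
    refine image_le_of_deriv_le_deriv_boundary hd1
      (fun s => (((hexp s).sub_const 1).const_mul _).const_add _) (by simp) fun s hs => ?_
    rw [hdd]
    exact (hg''_le s hs).trans_eq (by field_simp)
  have hg_le : ∀ s ∈ Icc 0 t,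
      g s ≤ g 0 + deriv g 0 * s + a / c ^ 2 * (exp (c * s) - c * s - 1) := by
    refine image_le_of_deriv_le_deriv_boundary hd0
      (fun s => ((((hasDerivAt_id s).const_mul _).const_add _).add
        ((((hexp s).sub ((hasDerivAt_id s).const_mul c)).sub_const 1).const_mul _)))
      (by simp) fun s hs => (hg'_le s hs).trans_eq (by field_simp)
  exact hg_le t ⟨ht, le_rfl⟩

theorem stmt_16_general (p : ℕ) (R : ℝ) (hR : 0 < R)
    (F : EuclideanSpace ℝ (Fin p) → ℝ)
    (hF : ContDiff ℝ 3 F)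
    (hsc : ∀ u v : EuclideanSpace ℝ (Fin p), ∀ t : ℝ,
      |iteratedDeriv 3 (fun s : ℝ => F (u + s • v)) t|
        ≤ R * ‖v‖ * iteratedDeriv 2 (fun s : ℝ => F (u + s • v)) t)
    (w v : EuclideanSpace ℝ (Fin p)) (hv : v ≠ 0) :
    F (w + v)
      ≤ F w + fderiv ℝ F w v
        + (iteratedDeriv 2 (fun s : ℝ => F (w + s • v)) 0 / (R ^ 2 * ‖v‖ ^ 2))
          * (Real.exp (R * ‖v‖) - R * ‖v‖ - 1) := by
  have hline : HasDerivAt (fun s : ℝ => w + s • v) v 0 := by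
    simpa using ((hasDerivAt_id (0 : ℝ)).smul_const v).const_add w
  have hdir : deriv (fun s : ℝ => F (w + s • v)) 0 = fderiv ℝ F w v := by
    have hFw : HasFDerivAt F (fderiv ℝ F w) (w + (0 : ℝ) • v) := by
      simpa using (hF.differentiable (by norm_num) w).hasFDerivAt
    exact (hFw.comp_hasDerivAt 0 hline).deriv
  have hg : ContDiff ℝ 3 (fun s : ℝ => F (w + s • v)) :=
    hF.comp (contDiff_const.add (contDiff_id.smul contDiff_const))
  have key := le_taylor_exp_of_iteratedDeriv_three_le (mul_pos hR (norm_pos_iff.mpr hv))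
    zero_le_one hg fun s _ => (le_abs_self _).trans (hsc w v s)
  simpa [hdir, mul_pow] using key

/-- Second property of `R`-modified self-concordance (Bach 2010, Proposition 1):
upper Taylor-type bound
`F(w+v) ≤ F(w) + ⟨∇F(w), v⟩ + (vᵀ∇²F(w)v / (R²‖v‖²)) (e^{R‖v‖} − R‖v‖ − 1)`,
where `⟨∇F(w), v⟩` is the directional derivative `fderiv ℝ F w v` and
`vᵀ∇²F(w)v` is the second directional derivative `(d²/dt²)|₀ F(w + t v)`. -/
theorem stmt_16 (p : ℕ) (hp : 1 ≤ p) (R : ℝ) (hR : 0 < R)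
    (F : EuclideanSpace ℝ (Fin p) → ℝ)
    (hF : ContDiff ℝ 3 F) (hconv : ConvexOn ℝ Set.univ F)
    (hsc : ∀ u v : EuclideanSpace ℝ (Fin p), ∀ t : ℝ,
      |iteratedDeriv 3 (fun s : ℝ => F (u + s • v)) t|
        ≤ R * ‖v‖ * iteratedDeriv 2 (fun s : ℝ => F (u + s • v)) t)
    (w v : EuclideanSpace ℝ (Fin p)) (hv : v ≠ 0) :
    F (w + v)
      ≤ F w + fderiv ℝ F w v
        + (iteratedDeriv 2 (fun s : ℝ => F (w + s • v)) 0 / (R ^ 2 * ‖v‖ ^ 2))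
          * (Real.exp (R * ‖v‖) - R * ‖v‖ - 1) :=
  stmt_16_general p R hR F hF hsc w v hv
end
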